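/- arXiv:1206.3846 — 3 statements merged into one kernel-verified Lean document; each statement's English description precedes it below -/
import Mathlib

section
/- Let a(t) = -Ĵ₀t²/2 + (1/β)[((1+t)/2)log((1+t)/2) + ((1-t)/2)log((1-t)/2)] on (-1,1) and F(t) = a(t) - a(m_β), where m_β ∈ (0,1) satisfies m_β = tanh(βĴ₀ m_β) and βĴ₀ > 1. Then F(m_β) = 0 and F(t) ≥ 0 for all t ∈ (-1,1). -/
/-!
The derivative of `a` is `β⁻¹ (artanh t - β Ĵ₀ t)`. Since `artanh` is convex on `[0, 1)`, the
function `artanh t - β Ĵ₀ t` is convex there; it vanishes at `0` and, by the fixed-point equation,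
at `m_β`, so it is `≤ 0` on `[0, m_β]` and `≥ 0` on `[m_β, 1)`. Hence `a` decreases on `[0, m_β]`
and increases on `[m_β, 1)`, and as `a` is even, `m_β` minimizes it on `(-1, 1)`.
-/

open Real Set

namespace Real

lemma artanh_eq_half_log_sub_log {x : ℝ} (hx : x ∈ Ioo (-1) 1) :
    artanh x = (log (1 + x) - log (1 - x)) / 2 := by
  rw [artanh_eq_half_log (Ioo_subset_Icc_self hx),
    log_div (by linarith [hx.1]) (by linarith [hx.2])]
  ring

lemma hasDerivAt_artanh {x : ℝ} (hx : x ∈ Ioo (-1) 1) :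
    HasDerivAt artanh (1 - x ^ 2)⁻¹ x := by
  have h₁ : 1 + x ≠ 0 := by linarith [hx.1]
  have h₂ : 1 - x ≠ 0 := by linarith [hx.2]
  have h₃ : 1 - x ^ 2 ≠ 0 := by rw [← one_pow 2, sq_sub_sq]; exact mul_ne_zero h₁ h₂
  have hlog : HasDerivAt (fun y => (log (1 + y) - log (1 - y)) / 2)
      ((1 / (1 + x) - -1 / (1 - x)) / 2) x :=
    ((((hasDerivAt_id x).const_add 1).log h₁).sub
      (((hasDerivAt_id x).const_sub 1).log h₂)).div_const 2
  refine (hlog.congr_deriv ?_).congr_of_eventuallyEq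
    (Filter.eventually_of_mem (Ioo_mem_nhds hx.1 hx.2) fun y hy => artanh_eq_half_log_sub_log hy)
  field_simp
  ring

lemma convexOn_artanh : ConvexOn ℝ (Ico 0 1) artanh := by
  have hsub : Ico (0 : ℝ) 1 ⊆ Ioo (-1) 1 := fun x hx => ⟨by linarith [hx.1], hx.2⟩
  refine MonotoneOn.convexOn_of_deriv (convex_Ico 0 1)
    (fun x hx => (hasDerivAt_artanh (hsub hx)).continuousAt.continuousWithinAt)
    (fun x hx => (hasDerivAt_artanh (hsub (interior_subset hx))).differentiableAt
      |>.differentiableWithinAt) ?_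
  rw [interior_Ico]
  intro x hx y hy hxy
  rw [(hasDerivAt_artanh (Ioo_subset_Ioo_left (by norm_num) hx)).deriv,
    (hasDerivAt_artanh (Ioo_subset_Ioo_left (by norm_num) hy)).deriv]
  have : 0 < 1 - y ^ 2 := by nlinarith [hy.1, hy.2]
  gcongr
  nlinarith [hx.1]

lemma artanh_sub_mul_nonpos {c m x : ℝ} (hm : m ∈ Ioo 0 1) (hfix : artanh m = c * m)
    (hx : x ∈ Icc 0 m) : artanh x - c * x ≤ 0 := by
  have hg := convexOn_artanh.sub ((LinearMap.mul ℝ ℝ c).concaveOn (convex_Ico 0 1))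
  have := hg.le_on_segment (x := 0) (y := m) ⟨le_rfl, by norm_num⟩ ⟨hm.1.le, hm.2⟩
    (by rwa [segment_eq_Icc hm.1.le])
  simpa [hfix] using this

lemma artanh_sub_mul_nonneg {c m x : ℝ} (hm : m ∈ Ioo 0 1) (hfix : artanh m = c * m)
    (hx : x ∈ Ico m 1) : 0 ≤ artanh x - c * x := by
  have hg := convexOn_artanh.sub ((LinearMap.mul ℝ ℝ c).concaveOn (convex_Ico 0 1))
  have := hg.le_right_of_left_le'' (x := 0) ⟨le_rfl, by norm_num⟩ ⟨hm.1.le.trans hx.1, hx.2⟩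
    hm.1 hx.1 (by simp [hfix])
  simpa [hfix] using this

lemma mul_log_add_mul_log_eq_neg_binEntropy (t : ℝ) :
    (1 + t) / 2 * log ((1 + t) / 2) + (1 - t) / 2 * log ((1 - t) / 2)
      = -binEntropy ((1 + t) / 2) := by
  rw [binEntropy, log_inv, log_inv, show 1 - (1 + t) / 2 = (1 - t) / 2 by ring]
  ring

end Real

/-- The function `a`, with its entropy term written as `-binEntropy ((1 + t) / 2)`. -/
noncomputable def meanFieldFreeEnergy (β J t : ℝ) : ℝ :=
  -J * t ^ 2 / 2 - β⁻¹ * binEntropy ((1 + t) / 2)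

section MeanFieldFreeEnergy

variable {β J : ℝ}

lemma meanFieldFreeEnergy_neg (β J t : ℝ) :
    meanFieldFreeEnergy β J (-t) = meanFieldFreeEnergy β J t := by
  rw [meanFieldFreeEnergy, meanFieldFreeEnergy, ← binEntropy_one_sub ((1 + t) / 2)]
  ring_nf

lemma hasDerivAt_meanFieldFreeEnergy (β J : ℝ) {t : ℝ} (ht : t ∈ Ioo (-1) 1) :
    HasDerivAt (meanFieldFreeEnergy β J) (β⁻¹ * artanh t - J * t) t := by
  have h₁ : 0 < 1 + t := by linarith [ht.1]
  have h₂ : 0 < 1 - t := by linarith [ht.2]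
  have hp : HasDerivAt (fun t : ℝ => (1 + t) / 2) (1 / 2) t :=
    ((hasDerivAt_id t).const_add 1).div_const 2
  have hH := (hasDerivAt_binEntropy (p := (1 + t) / 2) (by positivity)
    (by intro h; linarith)).comp t hp
  have hsq : HasDerivAt (fun t : ℝ => -J * t ^ 2 / 2) (-J * (2 * t) / 2) t := by
    simpa using ((hasDerivAt_pow 2 t).const_mul (-J)).div_const 2
  refine (hsq.sub (hH.const_mul β⁻¹)).congr_deriv ?_
  rw [artanh_eq_half_log (Ioo_subset_Icc_self ht), show 1 - (1 + t) / 2 = (1 - t) / 2 by ring,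
    log_div h₁.ne' h₂.ne', log_div h₁.ne' two_ne_zero, log_div h₂.ne' two_ne_zero]
  ring

lemma antitoneOn_meanFieldFreeEnergy {m : ℝ} (hβ : 0 < β) (hm : m ∈ Ioo 0 1)
    (hfix : artanh m = β * J * m) : AntitoneOn (meanFieldFreeEnergy β J) (Icc 0 m) := by
  have hsub : Icc 0 m ⊆ Ioo (-1) 1 := fun x hx => ⟨by linarith [hx.1], hx.2.trans_lt hm.2⟩
  refine antitoneOn_of_hasDerivWithinAt_nonpos (convex_Icc 0 m)
    (fun x hx => (hasDerivAt_meanFieldFreeEnergy β J (hsub hx)).continuousAt.continuousWithinAt)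
    (fun x hx => (hasDerivAt_meanFieldFreeEnergy β J (hsub (interior_subset hx))).hasDerivWithinAt)
    fun x hx => ?_
  rw [interior_Icc] at hx
  have := artanh_sub_mul_nonpos hm hfix (Ioo_subset_Icc_self hx)
  calc β⁻¹ * artanh x - J * x = β⁻¹ * (artanh x - β * J * x) := by field_simp
    _ ≤ 0 := mul_nonpos_of_nonneg_of_nonpos (inv_nonneg.2 hβ.le) this

lemma monotoneOn_meanFieldFreeEnergy {m : ℝ} (hβ : 0 < β) (hm : m ∈ Ioo 0 1)
    (hfix : artanh m = β * J * m) : MonotoneOn (meanFieldFreeEnergy β J) (Ico m 1) := by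
  have hsub : Ico m 1 ⊆ Ioo (-1) 1 := fun x hx => ⟨by linarith [hm.1, hx.1], hx.2⟩
  refine monotoneOn_of_hasDerivWithinAt_nonneg (convex_Ico m 1)
    (fun x hx => (hasDerivAt_meanFieldFreeEnergy β J (hsub hx)).continuousAt.continuousWithinAt)
    (fun x hx => (hasDerivAt_meanFieldFreeEnergy β J (hsub (interior_subset hx))).hasDerivWithinAt)
    fun x hx => ?_
  rw [interior_Ico] at hx
  have := artanh_sub_mul_nonneg hm hfix (Ioo_subset_Ico_self hx)
  calc (0 : ℝ) ≤ β⁻¹ * (artanh x - β * J * x) := mul_nonneg (inv_nonneg.2 hβ.le) this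
    _ = β⁻¹ * artanh x - J * x := by field_simp

lemma isMinOn_meanFieldFreeEnergy {m : ℝ} (hβ : 0 < β) (hm : m ∈ Ioo 0 1)
    (hfix : artanh m = β * J * m) : IsMinOn (meanFieldFreeEnergy β J) (Ioo (-1) 1) m := by
  refine isMinOn_iff.2 fun t ht => ?_
  wlog ht₀ : 0 ≤ t generalizing t
  · rw [← meanFieldFreeEnergy_neg β J t]
    exact this (-t) ⟨by linarith [ht.2], by linarith [ht.1]⟩ (by linarith [not_le.1 ht₀])
  rcases le_total t m with htm | hmt
  · exact antitoneOn_meanFieldFreeEnergy hβ hm hfix ⟨ht₀, htm⟩ ⟨hm.1.le, le_rfl⟩ htm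
  · exact monotoneOn_meanFieldFreeEnergy hβ hm hfix ⟨le_rfl, hm.2⟩ ⟨hmt, ht.2⟩ hmt

end MeanFieldFreeEnergy

theorem stmt_1_general (β J₀ mβ : ℝ) (hβ : 0 < β)
    (hm0 : 0 < mβ) (hm1 : mβ < 1) (hm : mβ = Real.tanh (β * J₀ * mβ))
    (a F : ℝ → ℝ)
    (ha : ∀ t, a t = -J₀ * t ^ 2 / 2 +
      (1 / β) * ((1 + t) / 2 * Real.log ((1 + t) / 2)
        + (1 - t) / 2 * Real.log ((1 - t) / 2)))
    (hF : ∀ t, F t = a t - a mβ) :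
    F mβ = 0 ∧ ∀ t ∈ Set.Ioo (-1 : ℝ) 1, 0 ≤ F t := by
  refine ⟨by rw [hF, sub_self], fun t ht => ?_⟩
  have hfix : artanh mβ = β * J₀ * mβ := (congrArg artanh hm).trans (artanh_tanh _)
  have ha' : a = meanFieldFreeEnergy β J₀ := funext fun t => by
    rw [ha, meanFieldFreeEnergy, mul_log_add_mul_log_eq_neg_binEntropy]
    ring
  rw [hF, sub_nonneg, ha']
  exact isMinOn_iff.1 (isMinOn_meanFieldFreeEnergy hβ ⟨hm0, hm1⟩ hfix) t ht

/-- With `a(t) = -Ĵ₀ t²/2 + β⁻¹[((1+t)/2)log((1+t)/2) + ((1-t)/2)log((1-t)/2)]`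
and `F(t) = a(t) - a(m_β)`, where `m_β ∈ (0,1)` solves `m = tanh (β Ĵ₀ m)` and
`β Ĵ₀ > 1`, one has `F(m_β) = 0` and `F(t) ≥ 0` on `(-1, 1)`. -/
theorem stmt_1 (β J₀ mβ : ℝ) (hβ : 0 < β) (hJ : 0 < J₀) (h : 1 < β * J₀)
    (hm0 : 0 < mβ) (hm1 : mβ < 1) (hm : mβ = Real.tanh (β * J₀ * mβ))
    (a F : ℝ → ℝ)
    (ha : ∀ t, a t = -J₀ * t ^ 2 / 2 +
      (1 / β) * ((1 + t) / 2 * Real.log ((1 + t) / 2)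
        + (1 - t) / 2 * Real.log ((1 - t) / 2)))
    (hF : ∀ t, F t = a t - a mβ) :
    F mβ = 0 ∧ ∀ t ∈ Set.Ioo (-1 : ℝ) 1, 0 ≤ F t :=
  stmt_1_general β J₀ mβ hβ hm0 hm1 hm a F ha hF
end

section
/- Let h_1, …, h_N > 0 with Σ_j h_j ≤ L, and suppose e : (0,∞) → ℝ satisfies e(h) - e* ≥ τ/(2h) for all h ≤ δ, where τ, δ > 0 and e* = inf e. If Σ_j h_j (e(h_j) - e*) ≤ 2ηL with η > 0, then the number of indices j with h_j ≤ δ is at most 4ηL/τ, and their total length Σ_{j : h_j ≤ δ} h_j is at most 4ηLδ/τ. -/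
open Finset

/-! Each index with `h j ≤ δ` contributes at least `τ / 2` to the nonnegative sum
`Σ_j h_j (e(h_j) - e*) ≤ 2ηL`, so there are at most `4ηL/τ` of them; each has length at most `δ`. -/

theorem Finset.card_filter_nsmul_le_sum {ι M : Type*} [AddCommMonoid M] [PartialOrder M]
    [IsOrderedAddMonoid M] (s : Finset ι) (p : ι → Prop) [DecidablePred p] (f : ι → M) (c : M)
    (hf : ∀ i ∈ s, 0 ≤ f i) (hc : ∀ i ∈ s, p i → c ≤ f i) :
    #(s.filter p) • c ≤ ∑ i ∈ s, f i :=
  (card_nsmul_le_sum _ f c fun i hi => hc i (mem_filter.1 hi).1 (mem_filter.1 hi).2).trans <|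
    sum_le_sum_of_subset_of_nonneg (filter_subset p s) fun i hi _ => hf i hi

theorem half_le_mul_of_div_two_mul_le {τ x y : ℝ} (hx : 0 < x) (h : τ / (2 * x) ≤ y) :
    τ / 2 ≤ x * y := by
  rw [div_le_iff₀ (by positivity)] at h
  linarith

theorem stmt_14_general (N : ℕ) (h : Fin N → ℝ) (L τ δ η estar : ℝ) (e : ℝ → ℝ)
    (hpos : ∀ j, 0 < h j)
    (hτ : 0 < τ) (hδ : 0 < δ)
    (hinf : ∀ x : ℝ, 0 < x → estar ≤ e x)
    (hlow : ∀ x : ℝ, 0 < x → x ≤ δ → τ / (2 * x) ≤ e x - estar)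
    (hbound : ∑ j, h j * (e (h j) - estar) ≤ 2 * η * L) :
    ((Finset.univ.filter fun j => h j ≤ δ).card : ℝ) ≤ 4 * η * L / τ ∧
      ∑ j ∈ Finset.univ.filter (fun j => h j ≤ δ), h j ≤ 4 * η * L * δ / τ := by
  set S := Finset.univ.filter fun j => h j ≤ δ
  have hmarkov : (#S : ℝ) * (τ / 2) ≤ 2 * η * L := by
    rw [← nsmul_eq_mul]
    refine (card_filter_nsmul_le_sum _ _ _ _ (fun j _ => ?_) (fun j _ hj => ?_)).trans hbound
    · exact mul_nonneg (hpos j).le (sub_nonneg.2 (hinf _ (hpos j)))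
    · exact half_le_mul_of_div_two_mul_le (hpos j) (hlow _ (hpos j) hj)
  have hcard : (#S : ℝ) ≤ 4 * η * L / τ := by
    rw [le_div_iff₀ hτ]
    linarith
  refine ⟨hcard, ?_⟩
  calc ∑ j ∈ S, h j ≤ #S • δ := sum_le_card_nsmul _ _ _ fun j hj => (mem_filter.1 hj).2
    _ = #S * δ := nsmul_eq_mul _ _
    _ ≤ 4 * η * L / τ * δ := by gcongr
    _ = 4 * η * L * δ / τ := by ring

/-- If `Σ_j h_j (e(h_j) - e*) ≤ 2ηL`, with `e - e* ≥ τ/(2h)` for `h ≤ δ` and `e* = inf e`,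
then the number of short intervals (`h_j ≤ δ`) is at most `4ηL/τ` and their total
length is at most `4ηLδ/τ`. -/
theorem stmt_14 (N : ℕ) (h : Fin N → ℝ) (L τ δ η estar : ℝ) (e : ℝ → ℝ)
    (hpos : ∀ j, 0 < h j) (hsum : ∑ j, h j ≤ L)
    (hL : 0 < L) (hτ : 0 < τ) (hδ : 0 < δ) (hη : 0 < η)
    (hinf : ∀ x : ℝ, 0 < x → estar ≤ e x)
    (hlow : ∀ x : ℝ, 0 < x → x ≤ δ → τ / (2 * x) ≤ e x - estar)
    (hbound : ∑ j, h j * (e (h j) - estar) ≤ 2 * η * L) :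
    ((Finset.univ.filter fun j => h j ≤ δ).card : ℝ) ≤ 4 * η * L / τ ∧
      ∑ j ∈ Finset.univ.filter (fun j => h j ≤ δ), h j ≤ 4 * η * L * δ / τ :=
  stmt_14_general N h L τ δ η estar e hpos hτ hδ hinf hlow hbound
end

section
/- Suppose K : (0,1] → ℝ satisfies K(h) ≥ c·max{1/h, γ²(h-h*)²·𝟙[c'h* ≤ h ≤ C'/γ], 𝟙[h ≥ C'/γ]} in the piecewise sense: K(h) ≥ c/h for h ≤ c'h*, K(h) ≥ cγ²(h-h*)² for c'h* ≤ h ≤ C'/γ, and K(h) ≥ c for h ≥ C'/γ, where h* = Θ(γ^{-2/3}). Let intervals I_1,…,I_N with lengths |I_j| tile part of [0,L] and satisfy Σ_j |I_j| K(|I_j|) ≤ 10Lγ^{2/3+ε₀}. Then the total length of intervals with ||I_j| - h*| ≥ h*γ^{ε'} is at most C L γ^{ε₀ - 2ε'} for 0 < ε' < ε₀/2 and γ small, for a suitable constant C. -/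
open Finset

/-! A Markov-type bound. On an interval far from `h*`, each of the three regimes of the lower
bound on `K` gives `K ≥ m γ^{2/3 + 2ε'}`: for short intervals `c/h ≥ c/(c' c₂) γ^{2/3}`, in the
quadratic regime `(h - h*)² ≥ (h* γ^{ε'})² ≥ c₁² γ^{-4/3 + 2ε'}`, and for long ones `c ≥ c γ^{2/3 + 2ε'}`.
So the far intervals carry energy at least `m γ^{2/3 + 2ε'}` times their total length, while all
intervals together carry at most `10 L γ^{2/3 + ε₀}`. -/

theorem sum_filter_le_sum_mul_div {ι : Type*} (s : Finset ι) (p : ι → Prop) [DecidablePred p]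
    (ℓ w : ι → ℝ) {κ : ℝ} (hκ : 0 < κ) (hℓ : ∀ j ∈ s, 0 ≤ ℓ j) (hw : ∀ j ∈ s, 0 ≤ w j)
    (hpw : ∀ j ∈ s, p j → κ ≤ w j) :
    ∑ j ∈ s with p j, ℓ j ≤ (∑ j ∈ s, ℓ j * w j) / κ := by
  rw [le_div_iff₀ hκ, sum_mul]
  calc ∑ j ∈ s with p j, ℓ j * κ
      ≤ ∑ j ∈ s with p j, ℓ j * w j := by
        refine sum_le_sum fun j hj => ?_
        rw [mem_filter] at hj
        exact mul_le_mul_of_nonneg_left (hpw j hj.1 hj.2) (hℓ j hj.1)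
    _ ≤ ∑ j ∈ s, ℓ j * w j :=
        sum_le_sum_of_subset_of_nonneg (filter_subset _ _) fun j hj _ =>
          mul_nonneg (hℓ j hj) (hw j hj)

section LowerBounds

variable {γ c hstar h : ℝ} {K : ℝ → ℝ}

theorem div_mul_rpow_le_of_le_div {c' c₂ : ℝ} (hγ : 0 < γ) (hc : 0 ≤ c) (hc' : 0 ≤ c')
    (hh : 0 < h) (hhs : h ≤ c' * hstar) (hst : hstar ≤ c₂ * γ ^ (-(2 : ℝ) / 3))
    (hK : c / h ≤ K h) :
    c / (c' * c₂) * γ ^ ((2 : ℝ) / 3) ≤ K h := by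
  have hrpow : γ ^ ((2 : ℝ) / 3) = (γ ^ (-(2 : ℝ) / 3))⁻¹ := by
    rw [neg_div, Real.rpow_neg hγ.le, inv_inv]
  have hh' : h ≤ c' * c₂ * γ ^ (-(2 : ℝ) / 3) := by
    rw [mul_assoc]; exact hhs.trans (mul_le_mul_of_nonneg_left hst hc')
  calc c / (c' * c₂) * γ ^ ((2 : ℝ) / 3) = c / (c' * c₂ * γ ^ (-(2 : ℝ) / 3)) := by
        rw [hrpow, ← div_eq_mul_inv, div_div]
    _ ≤ c / h := div_le_div_of_nonneg_left hc hh hh'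
    _ ≤ K h := hK

theorem mul_sq_mul_rpow_le_mul_sq {c₁ ε' : ℝ} (hγ : 0 < γ) (hc : 0 ≤ c) (hc₁ : 0 ≤ c₁)
    (hst : c₁ * γ ^ (-(2 : ℝ) / 3) ≤ hstar) (hfar : hstar * γ ^ ε' ≤ |h - hstar|) :
    c * c₁ ^ 2 * γ ^ ((2 : ℝ) / 3 + 2 * ε') ≤ c * γ ^ 2 * (h - hstar) ^ 2 := by
  have hrpow : γ ^ ((2 : ℝ) / 3 + 2 * ε') = γ ^ 2 * (γ ^ (-(2 : ℝ) / 3)) ^ 2 * (γ ^ ε') ^ 2 := by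
    rw [← Real.rpow_natCast, ← Real.rpow_natCast, ← Real.rpow_natCast, ← Real.rpow_mul hγ.le,
      ← Real.rpow_mul hγ.le, ← Real.rpow_add hγ, ← Real.rpow_add hγ]
    norm_num; ring_nf
  have hfar_sq : (c₁ * γ ^ (-(2 : ℝ) / 3) * γ ^ ε') ^ 2 ≤ (h - hstar) ^ 2 := by
    rw [← sq_abs (h - hstar)]
    gcongr
    exact (mul_le_mul_of_nonneg_right hst (by positivity)).trans hfar
  calc c * c₁ ^ 2 * γ ^ ((2 : ℝ) / 3 + 2 * ε')
      = c * γ ^ 2 * (c₁ * γ ^ (-(2 : ℝ) / 3) * γ ^ ε') ^ 2 := by rw [hrpow]; ring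
    _ ≤ c * γ ^ 2 * (h - hstar) ^ 2 := by gcongr

theorem min_mul_rpow_le_of_far {c' C' c₁ c₂ ε' : ℝ} (hγ : 0 < γ) (hγ1 : γ ≤ 1) (hε' : 0 ≤ ε')
    (hc : 0 ≤ c) (hc' : 0 ≤ c') (hc₁ : 0 ≤ c₁) (hc₂ : 0 ≤ c₂)
    (hst₁ : c₁ * γ ^ (-(2 : ℝ) / 3) ≤ hstar) (hst₂ : hstar ≤ c₂ * γ ^ (-(2 : ℝ) / 3))
    (hK₁ : ∀ h : ℝ, 0 < h → h ≤ c' * hstar → c / h ≤ K h)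
    (hK₂ : ∀ h : ℝ, c' * hstar ≤ h → h ≤ C' / γ → c * γ ^ 2 * (h - hstar) ^ 2 ≤ K h)
    (hK₃ : ∀ h : ℝ, C' / γ ≤ h → c ≤ K h)
    (hh : 0 < h) (hfar : hstar * γ ^ ε' ≤ |h - hstar|) :
    min (c / (c' * c₂)) (min (c * c₁ ^ 2) c) * γ ^ ((2 : ℝ) / 3 + 2 * ε') ≤ K h := by
  have hpow_le : γ ^ ((2 : ℝ) / 3 + 2 * ε') ≤ γ ^ ((2 : ℝ) / 3) :=
    Real.rpow_le_rpow_of_exponent_ge hγ hγ1 (by linarith)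
  have hpow_nonneg : 0 ≤ γ ^ ((2 : ℝ) / 3 + 2 * ε') := by positivity
  rcases le_or_gt h (c' * hstar) with hsmall | hmid
  · calc _ ≤ c / (c' * c₂) * γ ^ ((2 : ℝ) / 3) :=
          mul_le_mul (min_le_left _ _) hpow_le hpow_nonneg (by positivity)
      _ ≤ K h := div_mul_rpow_le_of_le_div hγ hc hc' hh hsmall hst₂ (hK₁ h hh hsmall)
  rcases le_or_gt h (C' / γ) with hmid' | hlarge
  · calc _ ≤ c * c₁ ^ 2 * γ ^ ((2 : ℝ) / 3 + 2 * ε') :=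
          mul_le_mul_of_nonneg_right ((min_le_right _ _).trans (min_le_left _ _)) hpow_nonneg
      _ ≤ c * γ ^ 2 * (h - hstar) ^ 2 := mul_sq_mul_rpow_le_mul_sq hγ hc hc₁ hst₁ hfar
      _ ≤ K h := hK₂ h hmid.le hmid'
  · calc _ ≤ c * 1 :=
          mul_le_mul ((min_le_right _ _).trans (min_le_right _ _))
            (Real.rpow_le_one hγ.le hγ1 (by positivity)) hpow_nonneg hc
      _ ≤ K h := (mul_one c).symm ▸ hK₃ h hlarge.le

end LowerBounds

theorem stmt_19_general (c c' C' c₁ c₂ ε₀ ε' : ℝ)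
    (hc : 0 < c) (hc' : 0 < c') (hc₁ : 0 < c₁) (hc₁₂ : c₁ ≤ c₂)
    (hε'0 : 0 < ε') :
    ∃ C > (0 : ℝ), ∃ γ₀ > (0 : ℝ), ∀ γ : ℝ, 0 < γ → γ ≤ γ₀ →
      ∀ L > (0 : ℝ), ∀ hstar : ℝ,
        c₁ * γ ^ (-(2 : ℝ) / 3) ≤ hstar → hstar ≤ c₂ * γ ^ (-(2 : ℝ) / 3) →
      ∀ K : ℝ → ℝ,
        (∀ h : ℝ, 0 < h → 0 ≤ K h) →
        (∀ h : ℝ, 0 < h → h ≤ c' * hstar → c / h ≤ K h) →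
        (∀ h : ℝ, c' * hstar ≤ h → h ≤ C' / γ → c * γ ^ 2 * (h - hstar) ^ 2 ≤ K h) →
        (∀ h : ℝ, C' / γ ≤ h → c ≤ K h) →
      ∀ N : ℕ, ∀ ℓ : Fin N → ℝ,
        (∀ j, 0 < ℓ j) → (∑ j, ℓ j ≤ L) →
        (∑ j, ℓ j * K (ℓ j) ≤ 10 * L * γ ^ (2 / 3 + ε₀)) →
        ∑ j ∈ Finset.univ.filter (fun j => hstar * γ ^ ε' ≤ |ℓ j - hstar|), ℓ j ≤
          C * L * γ ^ (ε₀ - 2 * ε') := by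
  have hc₂ : 0 < c₂ := hc₁.trans_le hc₁₂
  set m := min (c / (c' * c₂)) (min (c * c₁ ^ 2) c)
  have hm : 0 < m := lt_min (by positivity) (lt_min (by positivity) hc)
  refine ⟨10 / m, by positivity, 1, one_pos, ?_⟩
  intro γ hγ hγ1 L _ hstar hst₁ hst₂ K hK₀ hK₁ hK₂ hK₃ N ℓ hℓ _ henergy
  have hfar_le : ∀ j ∈ univ, hstar * γ ^ ε' ≤ |ℓ j - hstar| →
      m * γ ^ ((2 : ℝ) / 3 + 2 * ε') ≤ K (ℓ j) := fun j _ =>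
    min_mul_rpow_le_of_far hγ hγ1 hε'0.le hc.le hc'.le hc₁.le hc₂.le hst₁ hst₂ hK₁ hK₂ hK₃ (hℓ j)
  calc _ ≤ (∑ j, ℓ j * K (ℓ j)) / (m * γ ^ ((2 : ℝ) / 3 + 2 * ε')) :=
        sum_filter_le_sum_mul_div _ _ ℓ (K ∘ ℓ) (by positivity) (fun j _ => (hℓ j).le)
          (fun j _ => hK₀ _ (hℓ j)) hfar_le
    _ ≤ 10 * L * γ ^ (2 / 3 + ε₀) / (m * γ ^ ((2 : ℝ) / 3 + 2 * ε')) := by gcongr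
    _ = 10 / m * L * γ ^ (ε₀ - 2 * ε') := by
        rw [show ε₀ - 2 * ε' = (2 / 3 + ε₀) - (2 / 3 + 2 * ε') by ring, Real.rpow_sub hγ]
        field_simp

/-- If `K(h) = e(h) - e(h*) ≥ 0` satisfies the piecewise lower bounds `K(h) ≥ c/h` for
`h ≤ c' h*`, `K(h) ≥ c γ² (h - h*)²` for `c' h* ≤ h ≤ C'/γ`, `K(h) ≥ c` for `h ≥ C'/γ`,
with `h* = Θ(γ^{-2/3})`, and intervals of lengths `ℓ_j` tiling part of `[0,L]` satisfy
`Σ_j ℓ_j K(ℓ_j) ≤ 10 L γ^{2/3+ε₀}`, then the total length of the intervals with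
`|ℓ_j - h*| ≥ h* γ^{ε'}` is at most `C L γ^{ε₀ - 2ε'}` for a suitable constant `C`
and all `γ` small enough. -/
theorem stmt_19 (c c' C' c₁ c₂ ε₀ ε' : ℝ)
    (hc : 0 < c) (hc' : 0 < c') (hC' : 0 < C') (hc₁ : 0 < c₁) (hc₁₂ : c₁ ≤ c₂)
    (hε₀0 : 0 < ε₀) (hε₀1 : ε₀ < 1 / 3) (hε'0 : 0 < ε') (hε' : ε' < ε₀ / 2) :
    ∃ C > (0 : ℝ), ∃ γ₀ > (0 : ℝ), ∀ γ : ℝ, 0 < γ → γ ≤ γ₀ →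
      ∀ L > (0 : ℝ), ∀ hstar : ℝ,
        c₁ * γ ^ (-(2 : ℝ) / 3) ≤ hstar → hstar ≤ c₂ * γ ^ (-(2 : ℝ) / 3) →
      ∀ K : ℝ → ℝ,
        (∀ h : ℝ, 0 < h → 0 ≤ K h) →
        (∀ h : ℝ, 0 < h → h ≤ c' * hstar → c / h ≤ K h) →
        (∀ h : ℝ, c' * hstar ≤ h → h ≤ C' / γ → c * γ ^ 2 * (h - hstar) ^ 2 ≤ K h) →
        (∀ h : ℝ, C' / γ ≤ h → c ≤ K h) →
      ∀ N : ℕ, ∀ ℓ : Fin N → ℝ,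
        (∀ j, 0 < ℓ j) → (∑ j, ℓ j ≤ L) →
        (∑ j, ℓ j * K (ℓ j) ≤ 10 * L * γ ^ (2 / 3 + ε₀)) →
        ∑ j ∈ Finset.univ.filter (fun j => hstar * γ ^ ε' ≤ |ℓ j - hstar|), ℓ j ≤
          C * L * γ ^ (ε₀ - 2 * ε') :=
  stmt_19_general c c' C' c₁ c₂ ε₀ ε' hc hc' hc₁ hc₁₂ hε'0
end
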